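/- For all integers m₀, m₁ with 0 ≤ m₀ ≤ n−k−1 and 1 ≤ m₁ ≤ k−1, the matching V is acyclic: there is no nontrivial closed V-path a₀, b₀, a₁, …, b_r, a_{r+1} with r ≥ 0 and a₀ = a_{r+1}. -/

import Mathlib

set_option linter.unusedVariables false

/-- The alphabet `{0, 1, ∗}` for face sequences. -/
inductive Letter : Type
  | zero
  | one
  | star
  deriving DecidableEq

/-- A sequence of length `n` over the alphabet `{0, 1, ∗}`. -/
abbrev FSeq (n : ℕ) := Fin n → Letter

/-- `S(1)`, the number of `1`'s in `S`. -/
def count1 {n : ℕ} (S : FSeq n) : ℕ := (Finset.univ.filter fun i => S i = Letter.one).card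

/-- `S(0)`, the number of `0`'s in `S`. -/
def count0 {n : ℕ} (S : FSeq n) : ℕ := (Finset.univ.filter fun i => S i = Letter.zero).card

/-- The number of `∗`'s in `S`. -/
def countStar {n : ℕ} (S : FSeq n) : ℕ := (Finset.univ.filter fun i => S i = Letter.star).card

/-- A face sequence: either no `∗` and exactly `k` ones, or at most `k-1` ones and
(#ones) + (#stars) ≥ `k+1`. -/
def FaceSeq {n : ℕ} (k : ℕ) (S : FSeq n) : Prop :=
  (countStar S = 0 ∧ count1 S = k) ∨ (count1 S + 1 ≤ k ∧ k + 1 ≤ count1 S + countStar S)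

/-- `v₀`, the sequence of `k` ones followed by `n - k` zeros. -/
def v0seq (n k : ℕ) : FSeq n := fun i => if (i : ℕ) < k then Letter.one else Letter.zero

/-- `S` contains at least one `∗`. -/
def hasStar {n : ℕ} (S : FSeq n) : Prop := ∃ i, S i = Letter.star

/-- There is a `1` to the right of the rightmost `∗` (in particular `S` contains a `∗`). -/
def OneRight {n : ℕ} (S : FSeq n) : Prop :=
  hasStar S ∧ ∃ i, S i = Letter.one ∧ ∀ j, i < j → S j ≠ Letter.star

/-- There is no `1` to the right of the rightmost `∗` (and `S` contains a `∗`). -/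
def NoOneRight {n : ℕ} (S : FSeq n) : Prop :=
  hasStar S ∧ ∀ i, S i = Letter.one → ∃ j, i < j ∧ S j = Letter.star

/-- There is a `0` to the left of the leftmost `∗` (in particular `S` contains a `∗`). -/
def ZeroLeft {n : ℕ} (S : FSeq n) : Prop :=
  hasStar S ∧ ∃ i, S i = Letter.zero ∧ ∀ j, j < i → S j ≠ Letter.star

/-- There is no `0` to the left of the leftmost `∗` (and `S` contains a `∗`). -/
def NoZeroLeft {n : ℕ} (S : FSeq n) : Prop :=
  hasStar S ∧ ∀ i, S i = Letter.zero → ∃ j, j < i ∧ S j = Letter.star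

/-- `i` is the position of the rightmost `1` of `S`. -/
def IsRightmostOne {n : ℕ} (S : FSeq n) (i : Fin n) : Prop :=
  S i = Letter.one ∧ ∀ j, i < j → S j ≠ Letter.one

/-- `i` is the position of the rightmost `∗` of `S`. -/
def IsRightmostStar {n : ℕ} (S : FSeq n) (i : Fin n) : Prop :=
  S i = Letter.star ∧ ∀ j, i < j → S j ≠ Letter.star

/-- `i` is the position of the leftmost `0` of `S`. -/
def IsLeftmostZero {n : ℕ} (S : FSeq n) (i : Fin n) : Prop :=
  S i = Letter.zero ∧ ∀ j, j < i → S j ≠ Letter.zero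

/-- `i` is the position of the leftmost `∗` of `S`. -/
def IsLeftmostStar {n : ℕ} (S : FSeq n) (i : Fin n) : Prop :=
  S i = Letter.star ∧ ∀ j, j < i → S j ≠ Letter.star

/-- Condition of rule (1), subcondition (a). -/
def Cond1a {n : ℕ} (k m0 m1 : ℕ) (S : FSeq n) : Prop :=
  count1 S + 1 ≤ k ∧ OneRight S ∧ count1 S ≠ m1

/-- Condition of rule (1), subcondition (b). -/
def Cond1b {n : ℕ} (k m0 m1 : ℕ) (S : FSeq n) : Prop :=
  count1 S + 1 ≤ k ∧ OneRight S ∧ count1 S = m1 ∧ m0 < count0 S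

/-- Condition of rule (1), subcondition (c): no `0` to the left of the leftmost `∗`. -/
def Cond1c {n : ℕ} (k m0 m1 : ℕ) (S : FSeq n) : Prop :=
  count1 S + 1 ≤ k ∧ OneRight S ∧ count1 S = m1 ∧ count0 S = m0 ∧ NoZeroLeft S

/-- Condition of rule (2), subcondition (a): here `count1 S + 1 ≠ m1` encodes `S(1) ≠ m₁ - 1`. -/
def Cond2a {n : ℕ} (k m0 m1 : ℕ) (S : FSeq n) : Prop :=
  count1 S + 2 ≤ k ∧ NoOneRight S ∧ count1 S + 1 ≠ m1

/-- Condition of rule (2), subcondition (b). -/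
def Cond2b {n : ℕ} (k m0 m1 : ℕ) (S : FSeq n) : Prop :=
  count1 S + 2 ≤ k ∧ NoOneRight S ∧ count1 S + 1 = m1 ∧ m0 < count0 S

/-- Condition of rule (2), subcondition (c). -/
def Cond2c {n : ℕ} (k m0 m1 : ℕ) (S : FSeq n) : Prop :=
  count1 S + 2 ≤ k ∧ NoOneRight S ∧ count1 S + 1 = m1 ∧ count0 S = m0 ∧ NoZeroLeft S

/-- `S` is of type 1 (satisfies the condition of rule (1)). -/
def Type1 {n : ℕ} (k m0 m1 : ℕ) (S : FSeq n) : Prop :=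
  Cond1a k m0 m1 S ∨ Cond1b k m0 m1 S ∨ Cond1c k m0 m1 S

/-- `S` is of type 2 (satisfies the condition of rule (2)). -/
def Type2 {n : ℕ} (k m0 m1 : ℕ) (S : FSeq n) : Prop :=
  Cond2a k m0 m1 S ∨ Cond2b k m0 m1 S ∨ Cond2c k m0 m1 S

/-- `S` is of type 3: `S(1) = k-1`, `S(0) ≤ n-k-1`, no `1` right of the rightmost `∗`,
a `0` left of the leftmost `∗`. -/
def Type3 {n : ℕ} (k : ℕ) (S : FSeq n) : Prop :=
  count1 S + 1 = k ∧ count0 S + k + 1 ≤ n ∧ NoOneRight S ∧ ZeroLeft S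

/-- `S` is of type 4: `S(1) = k-1`, `S(0) ≤ n-k-2`, no `1` right of the rightmost `∗`,
no `0` left of the leftmost `∗`. -/
def Type4 {n : ℕ} (k : ℕ) (S : FSeq n) : Prop :=
  count1 S + 1 = k ∧ count0 S + k + 2 ≤ n ∧ NoOneRight S ∧ NoZeroLeft S

/-- `S` is of type 5: `S(1) = m₁`, `S(0) ≤ m₀`, a `1` right of the rightmost `∗`,
a `0` left of the leftmost `∗`. -/
def Type5 {n : ℕ} (m0 m1 : ℕ) (S : FSeq n) : Prop :=
  count1 S = m1 ∧ count0 S ≤ m0 ∧ OneRight S ∧ ZeroLeft S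

/-- `S` is of type 6: `S(1) = m₁`, `S(0) < m₀`, a `1` right of the rightmost `∗`,
no `0` left of the leftmost `∗`. -/
def Type6 {n : ℕ} (m0 m1 : ℕ) (S : FSeq n) : Prop :=
  count1 S = m1 ∧ count0 S < m0 ∧ OneRight S ∧ NoZeroLeft S

/-- `S` is of type 7: `S(1) = m₁-1`, `S(0) ≤ m₀`, no `1` right of the rightmost `∗`,
a `0` left of the leftmost `∗`. -/
def Type7 {n : ℕ} (m0 m1 : ℕ) (S : FSeq n) : Prop :=
  count1 S + 1 = m1 ∧ count0 S ≤ m0 ∧ NoOneRight S ∧ ZeroLeft S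

/-- `S` is of type 8: `S(1) = m₁-1`, `S(0) < m₀`, no `1` right of the rightmost `∗`,
no `0` left of the leftmost `∗`. -/
def Type8 {n : ℕ} (m0 m1 : ℕ) (S : FSeq n) : Prop :=
  count1 S + 1 = m1 ∧ count0 S < m0 ∧ NoOneRight S ∧ NoZeroLeft S

/-- `S` is of type 9: `S(1) = k`, `S(0) = n-k`, and `S ≠ v₀`. -/
def Type9 {n : ℕ} (k : ℕ) (S : FSeq n) : Prop :=
  count1 S = k ∧ count0 S + k = n ∧ S ≠ v0seq n k

/-- `S` is of type 10: `S(1) = k-1`, `S(0) = n-k-1`, no `1` right of the rightmost `∗`,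
no `0` left of the leftmost `∗`. -/
def Type10 {n : ℕ} (k : ℕ) (S : FSeq n) : Prop :=
  count1 S + 1 = k ∧ count0 S + k + 1 = n ∧ NoOneRight S ∧ NoZeroLeft S

/-- `S` is of type `i` for `1 ≤ i ≤ 10` (and of no type otherwise). -/
def OfType {n : ℕ} (k m0 m1 : ℕ) (i : ℕ) (S : FSeq n) : Prop :=
  match i with
  | 1 => Type1 k m0 m1 S
  | 2 => Type2 k m0 m1 S
  | 3 => Type3 k S
  | 4 => Type4 k S
  | 5 => Type5 m0 m1 S
  | 6 => Type6 m0 m1 S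
  | 7 => Type7 m0 m1 S
  | 8 => Type8 m0 m1 S
  | 9 => Type9 k S
  | 10 => Type10 k S
  | _ => False

/-- The replacement of rule (1): replace the rightmost `1` with `∗`. -/
def Apply1 {n : ℕ} (S S' : FSeq n) : Prop :=
  ∃ i, IsRightmostOne S i ∧ S' = Function.update S i Letter.star

/-- The replacement of rule (2): replace the rightmost `∗` with `1`. -/
def Apply2 {n : ℕ} (S S' : FSeq n) : Prop :=
  ∃ i, IsRightmostStar S i ∧ S' = Function.update S i Letter.one

/-- The replacement of rules (3), (5) and (7): replace the leftmost `0` with `∗`. -/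
def Apply3 {n : ℕ} (S S' : FSeq n) : Prop :=
  ∃ i, IsLeftmostZero S i ∧ S' = Function.update S i Letter.star

/-- The replacement of rules (4), (6) and (8): replace the leftmost `∗` with `0`. -/
def Apply4 {n : ℕ} (S S' : FSeq n) : Prop :=
  ∃ i, IsLeftmostStar S i ∧ S' = Function.update S i Letter.zero

/-- The replacement of rule (9): replace the leftmost `0` and the rightmost `1` each with `∗`. -/
def Apply9 {n : ℕ} (S S' : FSeq n) : Prop :=
  ∃ i j, IsLeftmostZero S i ∧ IsRightmostOne S j ∧
    S' = Function.update (Function.update S i Letter.star) j Letter.star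

/-- The replacement of rule (10): replace the leftmost `∗` with `0` and the other `∗` with `1`. -/
def Apply10 {n : ℕ} (S S' : FSeq n) : Prop :=
  ∃ i j, IsLeftmostStar S i ∧ IsRightmostStar S j ∧ i ≠ j ∧
    S' = Function.update (Function.update S i Letter.zero) j Letter.one

/-- The matching `V` on face sequences: a face sequence `S` of type 1, 3, 5, 7 or 9 is
matched with the result `S'` of applying the corresponding rule to it. -/
def Vmatch {n : ℕ} (k m0 m1 : ℕ) (S S' : FSeq n) : Prop :=
  FaceSeq k S ∧
    ((Type1 k m0 m1 S ∧ Apply1 S S') ∨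
     (Type3 k S ∧ Apply3 S S') ∨
     (Type5 m0 m1 S ∧ Apply3 S S') ∨
     (Type7 m0 m1 S ∧ Apply3 S S') ∨
     (Type9 k S ∧ Apply9 S S'))

/-- The vertex set of a face sequence `S`: the vertex sequences (0/1-sequences with
exactly `k` ones) agreeing with `S` wherever `S` is not `∗`. -/
def VertexSet {n : ℕ} (k : ℕ) (S : FSeq n) : Set (FSeq n) :=
  {v | (∀ i, v i ≠ Letter.star) ∧ count1 v = k ∧ ∀ i, S i ≠ Letter.star → v i = S i}

/-- The dimension of the face `F(S)`. -/
def fdim {n : ℕ} (S : FSeq n) : ℕ :=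
  if countStar S = 0 then 0 else countStar S - 1

/-- `T` is a codimension-1 face of `S`. -/
def Codim1 {n : ℕ} (k : ℕ) (T S : FSeq n) : Prop :=
  VertexSet k T ⊂ VertexSet k S ∧ fdim T + 1 = fdim S

/-- A (nontrivial) `V`-path `a₀, b₀, a₁, b₁, …, b_r, a_{r+1}` of face sequences. -/
structure VPath (n k m0 m1 r : ℕ) where
  a : Fin (r + 2) → FSeq n
  b : Fin (r + 1) → FSeq n
  face_a : ∀ i, FaceSeq k (a i)
  face_b : ∀ i, FaceSeq k (b i)
  mem : ∀ i : Fin (r + 1), Vmatch k m0 m1 (a i.castSucc) (b i)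
  codim_left : ∀ i : Fin (r + 1), Codim1 k (a i.castSucc) (b i)
  codim_right : ∀ i : Fin (r + 1), Codim1 k (a i.succ) (b i)
  step_ne : ∀ i : Fin (r + 1), a i.castSucc ≠ a i.succ

/-!
Each step `a, b, a'` of a `V`-path turns one letter of `a` into `∗` and then fills a different
`∗` of `b`. Order faces lexicographically by `2·(sum of the positions of the 1's) + w`, where
`w = 2·(position of the last ∗) + 1` on faces of type 5 and `0` otherwise, and then by the
sum of the positions of the 0's, larger being smaller. This potential strictly decreases at every
step whose target `a'` admits a further step to a matched face: the steps that do not decrease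
it land on faces of none of the types 1, 3, 5, 7, 9, except that filling the new `∗` of a type-7
face with `1` gives a type-3 face whose only step is of that kind. On a closed `V`-path every face
is matched and followed by a step, so the potential would decrease all the way around the cycle.
-/

open Finset Function

variable {n : ℕ}

theorem Letter.eq_zero_or_eq_one {c : Letter} (h : c ≠ .star) : c = .zero ∨ c = .one := by
  cases c <;> simp_all

section Counting

theorem sum_filter_update (S : FSeq n) (p : Fin n) (u c : Letter) (f : Fin n → ℕ) :
    (∑ i ∈ univ.filter (update S p u · = c), f i) + (if S p = c then f p else 0) =
      (∑ i ∈ univ.filter (S · = c), f i) + if u = c then f p else 0 := by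
  simp only [sum_filter]
  rw [← add_sum_erase _ _ (mem_univ p), ← add_sum_erase _ _ (mem_univ p),
    sum_congr rfl fun i hi => by rw [update_of_ne (ne_of_mem_erase hi)], update_self]
  ring

theorem sum_filter_update_update (S : FSeq n) {p q : Fin n} (hpq : p ≠ q) (u v c : Letter)
    (f : Fin n → ℕ) :
    (∑ i ∈ univ.filter (update (update S p u) q v · = c), f i) +
        (if S p = c then f p else 0) + (if S q = c then f q else 0) =
      (∑ i ∈ univ.filter (S · = c), f i) +
        (if u = c then f p else 0) + (if v = c then f q else 0) := by
  have h₁ := sum_filter_update S p u c f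
  have h₂ := sum_filter_update (update S p u) q v c f
  rw [update_of_ne hpq.symm] at h₂
  omega

theorem card_filter_update (S : FSeq n) (p : Fin n) (u c : Letter) :
    #(univ.filter (update S p u · = c)) + (if S p = c then 1 else 0) =
      #(univ.filter (S · = c)) + if u = c then 1 else 0 := by
  simpa only [card_eq_sum_ones] using sum_filter_update S p u c fun _ => 1

theorem card_filter_update_update (S : FSeq n) {p q : Fin n} (hpq : p ≠ q) (u v c : Letter) :
    #(univ.filter (update (update S p u) q v · = c)) +
        (if S p = c then 1 else 0) + (if S q = c then 1 else 0) =
      #(univ.filter (S · = c)) + (if u = c then 1 else 0) + (if v = c then 1 else 0) := by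
  simpa only [card_eq_sum_ones] using sum_filter_update_update S hpq u v c fun _ => 1

def posSum (c : Letter) (S : FSeq n) : ℕ :=
  ∑ i ∈ univ.filter (S · = c), (i : ℕ)

theorem countStar_pos {S : FSeq n} : 0 < countStar S ↔ hasStar S := by
  simp [countStar, hasStar, card_pos, filter_nonempty_iff]

def lastStar (S : FSeq n) : ℕ :=
  (univ.filter (S · = .star)).sup (↑)

theorem le_lastStar {S : FSeq n} {j : Fin n} (h : S j = .star) : (j : ℕ) ≤ lastStar S :=
  le_sup (f := ((↑) : Fin n → ℕ)) (by simpa using h)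

theorem lastStar_le {S : FSeq n} {m : ℕ} (h : ∀ j, S j = .star → (j : ℕ) ≤ m) :
    lastStar S ≤ m :=
  Finset.sup_le fun j hj => h j (by simpa using hj)

end Counting

section Positions

variable {S : FSeq n} {i j l p : Fin n}

theorem IsLeftmostZero.le (hl : IsLeftmostZero S l) (hi : S i = .zero) : l ≤ i :=
  not_lt.1 fun h => hl.2 i h hi

theorem IsRightmostOne.le (hp : IsRightmostOne S p) (hi : S i = .one) : i ≤ p :=
  not_lt.1 fun h => hp.2 i h hi

theorem ZeroLeft.lt_of_star (hZ : ZeroLeft S) (hl : IsLeftmostZero S l) (hj : S j = .star) :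
    l < j := by
  obtain ⟨-, z, hz, hzs⟩ := hZ
  refine lt_of_le_of_ne ((hl.le hz).trans (not_lt.1 fun h => hzs j h hj)) ?_
  rintro rfl
  simp [hl.1] at hj

theorem OneRight.lt_of_star (hO : OneRight S) (hp : IsRightmostOne S p) (hj : S j = .star) :
    j < p := by
  obtain ⟨-, o, ho, hos⟩ := hO
  refine lt_of_le_of_ne ((not_lt.1 fun h => hos j h hj).trans (hp.le ho)) ?_
  rintro rfl
  simp [hp.1] at hj

theorem ZeroLeft.not_noZeroLeft (hZ : ZeroLeft S) : ¬NoZeroLeft S := by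
  obtain ⟨-, i, hi, hno⟩ := hZ
  rintro ⟨-, h⟩
  obtain ⟨j, hj, hjs⟩ := h i hi
  exact hno j hj hjs

theorem OneRight.not_noOneRight (hO : OneRight S) : ¬NoOneRight S := by
  obtain ⟨-, i, hi, hno⟩ := hO
  rintro ⟨-, h⟩
  obtain ⟨j, hj, hjs⟩ := h i hi
  exact hno j hj hjs

theorem noZeroLeft_update_update (hl : IsLeftmostZero S l) (hlw : l < j) (v : Letter) :
    NoZeroLeft (update (update S l .star) j v) := by
  have hstar : update (update S l .star) j v l = .star := by
    rw [update_of_ne hlw.ne, update_self]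
  refine ⟨⟨l, hstar⟩, fun i hi => ⟨l, ?_, hstar⟩⟩
  rcases eq_or_ne i j with rfl | hij
  · exact hlw
  rcases eq_or_ne i l with rfl | hil
  · simp [update_of_ne hij] at hi
  rw [update_of_ne hij, update_of_ne hil] at hi
  exact lt_of_le_of_ne (hl.le hi) (Ne.symm hil)

theorem noOneRight_update_update (hp : IsRightmostOne S p) (hjp : j < p) (v : Letter) :
    NoOneRight (update (update S p .star) j v) := by
  have hstar : update (update S p .star) j v p = .star := by
    rw [update_of_ne hjp.ne', update_self]
  refine ⟨⟨p, hstar⟩, fun i hi => ⟨p, ?_, hstar⟩⟩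
  rcases eq_or_ne i j with rfl | hij
  · exact hjp
  rcases eq_or_ne i p with rfl | hip
  · simp [update_of_ne hij] at hi
  rw [update_of_ne hij, update_of_ne hip] at hi
  exact lt_of_le_of_ne (hp.le hi) hip

theorem NoOneRight.update_leftmostZero (hN : NoOneRight S) (hZ : ZeroLeft S)
    (hl : IsLeftmostZero S l) : NoOneRight (update S l .one) := by
  obtain ⟨j, hj⟩ := hN.1
  have hlj := hZ.lt_of_star hl hj
  have hj' : update S l .one j = .star := by rw [update_of_ne hlj.ne']; exact hj
  refine ⟨⟨j, hj'⟩, fun i hi => ?_⟩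
  rcases eq_or_ne i l with rfl | hil
  · exact ⟨j, hlj, hj'⟩
  rw [update_of_ne hil] at hi
  obtain ⟨j', hij', hj's⟩ := hN.2 i hi
  refine ⟨j', hij', ?_⟩
  rwa [update_of_ne (by rintro rfl; simp [hl.1] at hj's)]

end Positions

section Faces

variable {k : ℕ} {T b : FSeq n}

def fillStars (T : FSeq n) (A : Finset (Fin n)) : FSeq n :=
  fun i => if T i = .star then (if i ∈ A then .one else .zero) else T i

theorem fillStars_mem_vertexSet {A : Finset (Fin n)} (hA : ∀ i ∈ A, T i = .star)
    (hcard : count1 T + #A = k) : fillStars T A ∈ VertexSet k T := by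
  refine ⟨fun i => ?_, ?_, fun i hi => if_neg hi⟩
  · unfold fillStars; split_ifs <;> simp_all
  · rw [← hcard, count1, count1, card_filter, card_filter, ← filter_univ_mem A,
      card_filter, ← sum_add_distrib]
    refine sum_congr rfl fun i _ => ?_
    by_cases hi : i ∈ A
    · simp [fillStars, hA i hi, hi]
    · unfold fillStars; cases T i <;> simp [hi]

theorem exists_mem_vertexSet (h1 : count1 T + 1 ≤ k) (h2 : k + 1 ≤ count1 T + countStar T)
    {x : Fin n} (hx : T x = .star) (c : Letter) (hc : c ≠ .star) :
    ∃ v ∈ VertexSet k T, v x = c := by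
  set stars := univ.filter (T · = .star)
  have hxs : x ∈ stars := by simp [stars, hx]
  obtain ⟨A, hAs, hAcard, hxA⟩ : ∃ A ⊆ stars, #A = k - count1 T ∧ (x ∈ A ↔ c = .one) := by
    cases c
    · obtain ⟨A, hA, hAcard⟩ := exists_subset_card_eq (s := stars.erase x) (n := k - count1 T)
        (by rw [card_erase_of_mem hxs]; change _ ≤ countStar T - 1; omega)
      refine ⟨A, hA.trans (erase_subset _ _), hAcard, ?_⟩
      simpa using fun h => (mem_erase.1 (hA h)).1 rfl
    · obtain ⟨A, hxA, hA, hAcard⟩ := exists_subsuperset_card_eq (singleton_subset_iff.2 hxs)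
        (n := k - count1 T) (by rw [card_singleton]; omega) (by change _ ≤ countStar T; omega)
      exact ⟨A, hA, hAcard, by simpa using hxA (mem_singleton_self x)⟩
    · exact absurd rfl hc
  refine ⟨fillStars T A, fillStars_mem_vertexSet (fun i hi => by simpa [stars] using hAs hi)
    (by omega), ?_⟩
  cases c <;> simp_all [fillStars]

theorem FaceSeq.bounds (hT : FaceSeq k T) (hs : 0 < countStar T) :
    count1 T + 1 ≤ k ∧ k + 1 ≤ count1 T + countStar T := by
  rcases hT with h | h
  · omega
  · exact h

theorem FaceSeq.countStar_eq_zero (hT : FaceSeq k T) (h1 : count1 T = k) : countStar T = 0 := by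
  rcases hT with h | h
  · exact h.1
  · omega

theorem eq_of_vertexSet_subset (hT : FaceSeq k T) (hs : 0 < countStar T)
    (h : VertexSet k T ⊆ VertexSet k b) {x : Fin n} (hx : b x ≠ .star) : T x = b x := by
  obtain ⟨h1, h2⟩ := hT.bounds hs
  by_cases hTx : T x = .star
  · obtain ⟨v₀, hv₀, hv₀x⟩ := exists_mem_vertexSet h1 h2 hTx .zero (by simp)
    obtain ⟨v₁, hv₁, hv₁x⟩ := exists_mem_vertexSet h1 h2 hTx .one (by simp)
    have := ((h hv₀).2.2 x hx).trans ((h hv₁).2.2 x hx).symm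
    simp [hv₀x, hv₁x] at this
  · obtain ⟨y, hy⟩ := countStar_pos.1 hs
    obtain ⟨v, hv, -⟩ := exists_mem_vertexSet h1 h2 hy .zero (by simp)
    exact (hv.2.2 x hTx).symm.trans ((h hv).2.2 x hx)

theorem fdim_eq (S : FSeq n) : fdim S = countStar S - 1 := by
  unfold fdim; split_ifs <;> omega

theorem Codim1.exists_eq_update (hc : Codim1 k T b) (hT : FaceSeq k T) (hb : 3 ≤ countStar b) :
    ∃ w v, b w = .star ∧ v ≠ .star ∧ T = update b w v := by
  have hcard : countStar T + 1 = countStar b := by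
    have := hc.2
    rw [fdim_eq, fdim_eq] at this
    omega
  have hagree := fun x => eq_of_vertexSet_subset hT (by omega) hc.1.subset (x := x)
  have hsub : univ.filter (T · = .star) ⊆ univ.filter (b · = .star) := by
    intro x
    simp only [mem_filter, mem_univ, true_and]
    exact fun hTx => by_contra fun hbx => hbx (hagree x hbx ▸ hTx)
  obtain ⟨w, hw⟩ : ∃ w, univ.filter (b · = .star) \ univ.filter (T · = .star) = {w} :=
    card_eq_one.1 (by rw [card_sdiff_of_subset hsub]; change countStar b - countStar T = 1; omega)
  have hmem : ∀ x, (b x = .star ∧ T x ≠ .star) ↔ x = w := fun x => by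
    simpa using congrArg (x ∈ ·) hw
  refine ⟨w, T w, ((hmem w).2 rfl).1, ((hmem w).2 rfl).2, funext fun x => ?_⟩
  rcases eq_or_ne x w with rfl | hxw
  · simp
  rw [update_of_ne hxw]
  by_cases hbx : b x = .star
  · rw [hbx]; exact not_not.1 fun hTx => hxw ((hmem x).1 ⟨hbx, hTx⟩)
  · exact hagree x hbx

theorem Codim1.eq_of_countStar_eq_two (hc : Codim1 k T b) (hT : FaceSeq k T)
    (hb : countStar b = 2) :
    countStar T = 0 ∧ count1 T = k ∧ ∀ x, b x ≠ .star → T x = b x := by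
  have hdim : countStar T ≤ 1 := by have := hc.2; rw [fdim_eq, fdim_eq] at this; omega
  obtain ⟨hs, h1⟩ : countStar T = 0 ∧ count1 T = k := by
    rcases hT with h | h
    · exact h
    · omega
  have hTT : T ∈ VertexSet k T :=
    ⟨fun i hi => (countStar_pos.2 ⟨i, hi⟩).ne' hs, h1, fun _ _ => rfl⟩
  exact ⟨hs, h1, fun x hx => (hc.1.subset hTT).2.2 x hx⟩

end Faces

section Steps

variable {k : ℕ} {a a' : FSeq n} {l p : Fin n}

theorem FaceSeq.two_le_countStar (ha : FaceSeq k a) (hs : hasStar a) : 2 ≤ countStar a := by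
  have := ha.bounds (countStar_pos.2 hs)
  omega

theorem FaceSeq.count1_lt (ha : FaceSeq k a) (hs : hasStar a) : count1 a < k :=
  (ha.bounds (countStar_pos.2 hs)).1

theorem Codim1.update_star_cases (hc : Codim1 k a' (update a p .star)) (ha' : FaceSeq k a')
    (hap : a p ≠ .star) (hs : 2 ≤ countStar a) (hne : a' ≠ a) :
    (∃ v, v ≠ .star ∧ v ≠ a p ∧ a' = update a p v) ∨
      ∃ w, a w = .star ∧ ∃ v, v ≠ .star ∧ a' = update (update a p .star) w v := by
  have hb : countStar (update a p .star) = countStar a + 1 := by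
    simpa [countStar, hap] using card_filter_update a p .star .star
  obtain ⟨w, v, hw, hv, rfl⟩ := hc.exists_eq_update ha' (by omega)
  rcases eq_or_ne w p with rfl | hwp
  · refine Or.inl ⟨v, hv, ?_, update_idem _ _ _⟩
    rintro rfl
    exact hne (by simp)
  · exact Or.inr ⟨w, by rwa [update_of_ne hwp] at hw, v, hv, rfl⟩

theorem Codim1.rightmostOne_cases (hc : Codim1 k a' (update a p .star)) (ha' : FaceSeq k a')
    (ha : FaceSeq k a) (hO : OneRight a) (hp : IsRightmostOne a p) (hne : a' ≠ a) :
    a' = update a p .zero ∨ ∃ w < p, a w = .star ∧ NoOneRight a' ∧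
      (a' = update (update a p .star) w .zero ∨ a' = update (update a p .star) w .one) := by
  rcases hc.update_star_cases ha' (by simp [hp.1]) (ha.two_le_countStar hO.1) hne with
    ⟨v, hv, hvp, rfl⟩ | ⟨w, hw, v, hv, rfl⟩
  · cases v <;> simp_all [hp.1]
  · have hwp := hO.lt_of_star hp hw
    refine Or.inr ⟨w, hwp, hw, noOneRight_update_update hp hwp v, ?_⟩
    cases v <;> simp_all

theorem Codim1.leftmostZero_cases (hc : Codim1 k a' (update a l .star)) (ha' : FaceSeq k a')
    (ha : FaceSeq k a) (hZ : ZeroLeft a) (hl : IsLeftmostZero a l) (hne : a' ≠ a) :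
    a' = update a l .one ∨ ∃ w, l < w ∧ a w = .star ∧ NoZeroLeft a' ∧
      (a' = update (update a l .star) w .zero ∨ a' = update (update a l .star) w .one) := by
  rcases hc.update_star_cases ha' (by simp [hl.1]) (ha.two_le_countStar hZ.1) hne with
    ⟨v, hv, hvl, rfl⟩ | ⟨w, hw, v, hv, rfl⟩
  · cases v <;> simp_all [hl.1]
  · have hlw := hZ.lt_of_star hl hw
    refine Or.inr ⟨w, hlw, hw, noZeroLeft_update_update hl hlw v, ?_⟩
    cases v <;> simp_all

end Steps

section Matching

variable {k m0 m1 : ℕ} {S T : FSeq n}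

def Matched (k m0 m1 : ℕ) (S : FSeq n) : Prop :=
  ∃ S', Vmatch k m0 m1 S S'

def VStep (k m0 m1 : ℕ) (S T : FSeq n) : Prop :=
  FaceSeq k T ∧ T ≠ S ∧ ∃ b, Vmatch k m0 m1 S b ∧ Codim1 k T b

theorem VStep.matched (h : VStep k m0 m1 S T) : Matched k m0 m1 S :=
  let ⟨_, _, b, hb, _⟩ := h; ⟨b, hb⟩

theorem Type1.oneRight (h : Type1 k m0 m1 S) : OneRight S := by
  rcases h with h | h | h <;> exact h.2.1

theorem Type1.count1_lt (h : Type1 k m0 m1 S) : count1 S + 1 ≤ k := by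
  rcases h with h | h | h <;> exact h.1

theorem Type1.le_count0 (h : Type1 k m0 m1 S) (h1 : count1 S = m1) : m0 ≤ count0 S := by
  rcases h with ⟨-, -, h⟩ | ⟨-, -, -, h⟩ | ⟨-, -, -, h, -⟩
  · exact absurd h1 h
  · exact h.le
  · exact h.ge

theorem not_matched_of_noOneRight (hN : NoOneRight S) (h1 : count1 S + 2 ≤ k)
    (h7 : count1 S + 1 = m1 → m0 < count0 S) : ¬Matched k m0 m1 S := by
  rintro ⟨S', -, ⟨h, -⟩ | ⟨h, -⟩ | ⟨h, -⟩ | ⟨h, -⟩ | ⟨h, -⟩⟩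
  · exact h.oneRight.not_noOneRight hN
  · exact absurd h.1 (by omega)
  · exact h.2.2.1.not_noOneRight hN
  · exact absurd (h7 h.1) (not_lt.2 h.2.1)
  · exact absurd h.1 (by omega)

theorem not_matched_of_noZeroLeft (hN : NoZeroLeft S) (h1 : count1 S = m1) (h0 : count0 S < m0)
    (hk : m1 + 1 ≤ k) : ¬Matched k m0 m1 S := by
  rintro ⟨S', -, ⟨h, -⟩ | ⟨h, -⟩ | ⟨h, -⟩ | ⟨h, -⟩ | ⟨h, -⟩⟩
  · exact absurd (h.le_count0 h1) (not_le.2 h0)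
  · exact h.2.2.2.not_noZeroLeft hN
  · exact h.2.2.2.not_noZeroLeft hN
  · exact absurd h.1 (by omega)
  · exact absurd h.1 (by omega)

end Matching

section Potential

variable {m0 m1 : ℕ} {S T : FSeq n}

open Classical in
noncomputable def type5Weight (m0 m1 : ℕ) (S : FSeq n) : ℕ :=
  if Type5 m0 m1 S then 2 * lastStar S + 1 else 0

noncomputable def potential (m0 m1 : ℕ) (S : FSeq n) : ℕ ×ₗ ℕᵒᵈ :=
  toLex (2 * posSum .one S + type5Weight m0 m1 S, OrderDual.toDual (posSum .zero S))

theorem type5Weight_of_type5 (h : Type5 m0 m1 S) : type5Weight m0 m1 S = 2 * lastStar S + 1 :=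
  if_pos h

theorem type5Weight_of_not_type5 (h : ¬Type5 m0 m1 S) : type5Weight m0 m1 S = 0 :=
  if_neg h

theorem type5Weight_le {m : ℕ} (h : lastStar S ≤ m) : type5Weight m0 m1 S ≤ 2 * m + 1 := by
  unfold type5Weight; split_ifs <;> omega

theorem type5Weight_of_noOneRight (h : NoOneRight S) : type5Weight m0 m1 S = 0 :=
  type5Weight_of_not_type5 fun h5 => h5.2.2.1.not_noOneRight h

theorem type5Weight_of_noZeroLeft (h : NoZeroLeft S) : type5Weight m0 m1 S = 0 :=
  type5Weight_of_not_type5 fun h5 => h5.2.2.2.not_noZeroLeft h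

theorem type5Weight_of_countStar_eq_zero (h : countStar S = 0) : type5Weight m0 m1 S = 0 :=
  type5Weight_of_not_type5 fun h5 => (countStar_pos.2 h5.2.2.1.1).ne' h

theorem potential_lt_of_lt
    (h : 2 * posSum .one T + type5Weight m0 m1 T < 2 * posSum .one S + type5Weight m0 m1 S) :
    potential m0 m1 T < potential m0 m1 S :=
  Prod.Lex.toLex_lt_toLex.2 (Or.inl h)

theorem potential_lt_of_eq
    (h : 2 * posSum .one T + type5Weight m0 m1 T = 2 * posSum .one S + type5Weight m0 m1 S)
    (h0 : posSum .zero S < posSum .zero T) : potential m0 m1 T < potential m0 m1 S :=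
  Prod.Lex.toLex_lt_toLex.2 (Or.inr ⟨h, h0⟩)

end Potential

section Descent

variable {k m0 m1 : ℕ} {a a' : FSeq n} {l p : Fin n}

theorem potential_lt_of_type1 (ht : Type1 k m0 m1 a) (ha : FaceSeq k a)
    (hp : IsRightmostOne a p) (ha' : FaceSeq k a') (hc : Codim1 k a' (update a p .star))
    (hne : a' ≠ a) (hM : Matched k m0 m1 a') : potential m0 m1 a' < potential m0 m1 a := by
  have hO := ht.oneRight
  rcases hc.rightmostOne_cases ha' ha hO hp hne with rfl | ⟨w, hwp, hw, hN, rfl | rfl⟩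
  · have hP1 : posSum .one (update a p .zero) + p = posSum .one a := by
      simpa [posSum, hp.1] using sum_filter_update a p .zero .one (↑)
    obtain ⟨j, hj⟩ := hO.1
    have hjp := hO.lt_of_star hp hj
    have hW : type5Weight m0 m1 (update a p .zero) ≤ 2 * (p - 1) + 1 := by
      refine type5Weight_le (lastStar_le fun i hi => ?_)
      have hip : i ≠ p := by rintro rfl; simp at hi
      have := hO.lt_of_star hp (by rwa [update_of_ne hip] at hi)
      omega
    exact potential_lt_of_lt (by omega)
  · have h1 : count1 (update (update a p .star) w .zero) + 1 = count1 a := by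
      simpa [count1, hp.1, hw] using card_filter_update_update a hwp.ne' .star .zero .one
    have h0 : count0 (update (update a p .star) w .zero) = count0 a + 1 := by
      simpa [count0, hp.1, hw] using card_filter_update_update a hwp.ne' .star .zero .zero
    refine absurd hM (not_matched_of_noOneRight hN ?_ fun h => ?_)
    · have := ht.count1_lt; omega
    · have := ht.le_count0 (by omega); omega
  · have hP1 : posSum .one (update (update a p .star) w .one) + p = posSum .one a + w := by
      simpa [posSum, hp.1, hw] using sum_filter_update_update a hwp.ne' .star .one .one (↑)
    have hW := type5Weight_of_noOneRight (m0 := m0) (m1 := m1) hN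
    exact potential_lt_of_lt (by omega)

theorem potential_lt_of_moveZero (hN : NoOneRight a) (hl : IsLeftmostZero a l) {w : Fin n}
    (hw : a w = .star) (hlw : l < w) :
    potential m0 m1 (update (update a l .star) w .zero) < potential m0 m1 a := by
  have hP1 : posSum .one (update (update a l .star) w .zero) = posSum .one a := by
    simpa [posSum, hl.1, hw] using sum_filter_update_update a hlw.ne .star .zero .one (↑)
  have hP0 : posSum .zero (update (update a l .star) w .zero) + l = posSum .zero a + w := by
    simpa [posSum, hl.1, hw] using sum_filter_update_update a hlw.ne .star .zero .zero (↑)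
  have hW := type5Weight_of_noOneRight (m0 := m0) (m1 := m1) hN
  have hW' := type5Weight_of_noZeroLeft (m0 := m0) (m1 := m1)
    (noZeroLeft_update_update hl hlw .zero)
  exact potential_lt_of_eq (by omega) (by omega)

theorem Type3.eq_moveZero (ht : Type3 k a) (ha : FaceSeq k a) (hl : IsLeftmostZero a l)
    (ha' : FaceSeq k a') (hc : Codim1 k a' (update a l .star)) (hne : a' ≠ a) :
    ∃ w, l < w ∧ a w = .star ∧ a' = update (update a l .star) w .zero := by
  rcases hc.leftmostZero_cases ha' ha ht.2.2.2 hl hne with rfl | ⟨w, hlw, hw, hNZ, h | rfl⟩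
  · obtain ⟨j, hj⟩ := ht.2.2.2.1
    have hjl : j ≠ l := by rintro rfl; simp [hl.1] at hj
    have h1 : count1 (update a l .one) = count1 a + 1 := by
      simpa [count1, hl.1] using card_filter_update a l .one .one
    have := ha'.count1_lt ⟨j, by rwa [update_of_ne hjl]⟩
    have := ht.1
    omega
  · exact ⟨w, hlw, hw, h⟩
  · have h1 : count1 (update (update a l .star) w .one) = count1 a + 1 := by
      simpa [count1, hl.1, hw] using card_filter_update_update a hlw.ne .star .one .one
    have := ha'.count1_lt hNZ.1
    have := ht.1
    omega

theorem potential_lt_of_type3 (ht : Type3 k a) (ha : FaceSeq k a) (hl : IsLeftmostZero a l)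
    (ha' : FaceSeq k a') (hc : Codim1 k a' (update a l .star)) (hne : a' ≠ a) :
    potential m0 m1 a' < potential m0 m1 a := by
  obtain ⟨w, hlw, hw, rfl⟩ := ht.eq_moveZero ha hl ha' hc hne
  exact potential_lt_of_moveZero ht.2.2.1 hl hw hlw

theorem potential_lt_of_type5 (ht : Type5 m0 m1 a) (ha : FaceSeq k a) (hl : IsLeftmostZero a l)
    (ha' : FaceSeq k a') (hc : Codim1 k a' (update a l .star)) (hne : a' ≠ a) :
    potential m0 m1 a' < potential m0 m1 a := by
  have hW := type5Weight_of_type5 ht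
  obtain ⟨j, hj⟩ := ht.2.2.2.1
  have hlj : (l : ℕ) < lastStar a :=
    (Fin.lt_def.1 (ht.2.2.2.lt_of_star hl hj)).trans_le (le_lastStar hj)
  rcases hc.leftmostZero_cases ha' ha ht.2.2.2 hl hne with rfl | ⟨w, hlw, hw, hNZ, rfl | rfl⟩
  · have hP1 : posSum .one (update a l .one) = posSum .one a + l := by
      simpa [posSum, hl.1] using sum_filter_update a l .one .one (↑)
    have h1 : count1 (update a l .one) = count1 a + 1 := by
      simpa [count1, hl.1] using card_filter_update a l .one .one
    have hW' : type5Weight m0 m1 (update a l .one) = 0 :=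
      type5Weight_of_not_type5 fun h5 => by have := h5.1; have := ht.1; omega
    exact potential_lt_of_lt (by omega)
  · have hP1 : posSum .one (update (update a l .star) w .zero) = posSum .one a := by
      simpa [posSum, hl.1, hw] using sum_filter_update_update a hlw.ne .star .zero .one (↑)
    have hW' := type5Weight_of_noZeroLeft (m0 := m0) (m1 := m1) hNZ
    exact potential_lt_of_lt (by omega)
  · have hP1 : posSum .one (update (update a l .star) w .one) = posSum .one a + w := by
      simpa [posSum, hl.1, hw] using sum_filter_update_update a hlw.ne .star .one .one (↑)
    have hW' := type5Weight_of_noZeroLeft (m0 := m0) (m1 := m1) hNZ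
    have := le_lastStar hw
    exact potential_lt_of_lt (by omega)

theorem Type7.not_matched_of_vStep_update (ht : Type7 m0 m1 a) (hl : IsLeftmostZero a l)
    (hk : m1 + 1 ≤ k) {a'' : FSeq n} (h : VStep k m0 m1 (update a l .one) a'')
    (hM : Matched k m0 m1 a'') : False := by
  have hN := ht.2.2.1.update_leftmostZero ht.2.2.2 hl
  have h1 : count1 (update a l .one) = count1 a + 1 := by
    simpa [count1, hl.1] using card_filter_update a l .one .one
  have h0 : count0 (update a l .one) + 1 = count0 a := by
    simpa [count0, hl.1] using card_filter_update a l .one .zero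
  obtain ⟨ha'', hne, b, ⟨ha', hb⟩, hc⟩ := h
  rcases hb with ⟨h1', -⟩ | ⟨h3, l', hl', rfl⟩ | ⟨h5, -⟩ | ⟨h7, -⟩ | ⟨h9, -⟩
  · exact h1'.oneRight.not_noOneRight hN
  · obtain ⟨w, hlw, hw, rfl⟩ := h3.eq_moveZero ha' hl' ha'' hc hne
    have h1' : count1 (update (update (update a l .one) l' .star) w .zero) =
        count1 (update a l .one) := by
      simpa [count1, hl'.1, hw] using
        card_filter_update_update (update a l .one) hlw.ne .star .zero .one
    have h0' : count0 (update (update (update a l .one) l' .star) w .zero) =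
        count0 (update a l .one) := by
      simpa [count0, hl'.1, hw] using
        card_filter_update_update (update a l .one) hlw.ne .star .zero .zero
    have := ht.1
    have := ht.2.1
    exact not_matched_of_noZeroLeft (noZeroLeft_update_update hl' hlw .zero) (by omega)
      (by omega) hk hM
  · exact h5.2.2.1.not_noOneRight hN
  · have := h7.1; have := ht.1; omega
  · have := h9.1; have := ht.1; omega

theorem potential_lt_of_type7 (ht : Type7 m0 m1 a) (ha : FaceSeq k a) (hl : IsLeftmostZero a l)
    (hk : m1 + 1 ≤ k) (ha' : FaceSeq k a') (hc : Codim1 k a' (update a l .star)) (hne : a' ≠ a)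
    {a'' : FSeq n} (h : VStep k m0 m1 a' a'') (hM : Matched k m0 m1 a'') :
    potential m0 m1 a' < potential m0 m1 a := by
  rcases hc.leftmostZero_cases ha' ha ht.2.2.2 hl hne with rfl | ⟨w, hlw, hw, hNZ, rfl | rfl⟩
  · exact (ht.not_matched_of_vStep_update hl hk h hM).elim
  · exact potential_lt_of_moveZero ht.2.2.1 hl hw hlw
  · have h1 : count1 (update (update a l .star) w .one) = count1 a + 1 := by
      simpa [count1, hl.1, hw] using card_filter_update_update a hlw.ne .star .one .one
    have h0 : count0 (update (update a l .star) w .one) + 1 = count0 a := by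
      simpa [count0, hl.1, hw] using card_filter_update_update a hlw.ne .star .one .zero
    have := ht.1
    have := ht.2.1
    exact (not_matched_of_noZeroLeft hNZ (by omega) (by omega) hk h.matched).elim

theorem Type9.leftmostZero_lt_rightmostOne (ht : Type9 k a) (hs : countStar a = 0) {i j : Fin n}
    (hi : IsLeftmostZero a i) (hj : IsRightmostOne a j) : i < j := by
  by_contra! hji
  have hform : ∀ x, a x = if x ≤ j then .one else .zero := fun x => by
    cases hx : a x
    · have hxj : x ≠ j := by rintro rfl; simp [hj.1] at hx
      rw [if_neg fun h => hxj (le_antisymm h (hji.trans (hi.le hx)))]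
    · simp [hj.le hx]
    · exact absurd (countStar_pos.2 ⟨x, hx⟩) (by omega)
  have hk : k = j + 1 := by
    rw [← ht.1, count1, ← Fin.card_Iic]
    exact congrArg Finset.card (Finset.ext fun x => by simp [hform x])
  refine ht.2.2 (funext fun x => ?_)
  rw [hform x, v0seq, hk]
  simp only [Nat.lt_succ_iff, Fin.le_def]

theorem Codim1.eq_swap {i j : Fin n} (hc : Codim1 k a' (update (update a i .star) j .star))
    (ha' : FaceSeq k a') (hs : countStar a = 0) (h1 : count1 a = k) (hij : i ≠ j)
    (hi : a i = .zero) (hj : a j = .one) (hne : a' ≠ a) :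
    a' = update (update a i .one) j .zero := by
  have hs₀ : #(univ.filter (a · = .star)) = 0 := hs
  have hb : countStar (update (update a i .star) j .star) = 2 := by
    simpa [countStar, hi, hj, hs₀] using card_filter_update_update a hij .star .star .star
  obtain ⟨hs', h1', hagree⟩ := hc.eq_of_countStar_eq_two ha' hb
  have hnostar : ∀ x, a' x ≠ .star := fun x hx => (countStar_pos.2 ⟨x, hx⟩).ne' hs'
  have hform : a' = update (update a i (a' i)) j (a' j) := funext fun x => by
    rcases eq_or_ne x j with rfl | hxj; · simp
    rcases eq_or_ne x i with rfl | hxi; · simp [hxj]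
    have hax : a x ≠ .star := fun hx => (countStar_pos.2 ⟨x, hx⟩).ne' hs
    simpa [hxi, hxj] using hagree x (by simpa [hxi, hxj] using hax)
  have hcount := card_filter_update_update a hij (a' i) (a' j) .one
  rw [← hform] at hcount
  change count1 a' + _ + _ = count1 a + _ + _ at hcount
  rcases Letter.eq_zero_or_eq_one (hnostar i) with hai | hai <;>
    rcases Letter.eq_zero_or_eq_one (hnostar j) with haj | haj <;>
    simp only [hai, haj, hi, hj, reduceCtorEq, if_true, if_false, add_zero] at hcount
  · omega
  · exact absurd (hform.trans (by simp [hai, haj, ← hi, ← hj])) hne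
  · rw [hform, hai, haj]
  · omega

theorem potential_lt_of_type9 (ht : Type9 k a) (ha : FaceSeq k a) {i j : Fin n}
    (hi : IsLeftmostZero a i) (hj : IsRightmostOne a j) (ha' : FaceSeq k a')
    (hc : Codim1 k a' (update (update a i .star) j .star)) (hne : a' ≠ a) :
    potential m0 m1 a' < potential m0 m1 a := by
  have hs := ha.countStar_eq_zero ht.1
  have hij := ht.leftmostZero_lt_rightmostOne hs hi hj
  obtain rfl := hc.eq_swap ha' hs ht.1 hij.ne hi.1 hj.1 hne
  have hP1 : posSum .one (update (update a i .one) j .zero) + j = posSum .one a + i := by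
    simpa [posSum, hi.1, hj.1] using sum_filter_update_update a hij.ne .one .zero .one (↑)
  have hs' : countStar (update (update a i .one) j .zero) = countStar a := by
    simpa [countStar, hi.1, hj.1] using card_filter_update_update a hij.ne .one .zero .star
  have hW := type5Weight_of_countStar_eq_zero (m0 := m0) (m1 := m1) hs
  have hW' := type5Weight_of_countStar_eq_zero (m0 := m0) (m1 := m1) (hs'.trans hs)
  exact potential_lt_of_lt (by omega)

end Descent

section Acyclic

variable {k m0 m1 : ℕ} {a a' a'' : FSeq n}

theorem potential_lt_of_vStep (hk : m1 + 1 ≤ k) (h : VStep k m0 m1 a a')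
    (h' : VStep k m0 m1 a' a'') (hM : Matched k m0 m1 a'') :
    potential m0 m1 a' < potential m0 m1 a := by
  obtain ⟨ha', hne, b, ⟨ha, hb⟩, hc⟩ := h
  rcases hb with ⟨ht, p, hp, rfl⟩ | ⟨ht, l, hl, rfl⟩ | ⟨ht, l, hl, rfl⟩ | ⟨ht, l, hl, rfl⟩ |
    ⟨ht, i, j, hi, hj, rfl⟩
  · exact potential_lt_of_type1 ht ha hp ha' hc hne h'.matched
  · exact potential_lt_of_type3 ht ha hl ha' hc hne
  · exact potential_lt_of_type5 ht ha hl ha' hc hne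
  · exact potential_lt_of_type7 ht ha hl hk ha' hc hne h' hM
  · exact potential_lt_of_type9 ht ha hi hj ha' hc hne

namespace VPath

variable {r : ℕ} (P : VPath n k m0 m1 r)

theorem vStep (i : Fin (r + 1)) : VStep k m0 m1 (P.a i.castSucc) (P.a i.succ) :=
  ⟨P.face_a _, (P.step_ne i).symm, P.b i, P.mem i, P.codim_right i⟩

theorem exists_castSucc_eq (hP : P.a 0 = P.a (Fin.last (r + 1))) (m : Fin (r + 2)) :
    ∃ i : Fin (r + 1), P.a i.castSucc = P.a m := by
  induction m using Fin.lastCases with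
  | last => exact ⟨0, hP⟩
  | cast i => exact ⟨i, rfl⟩

theorem matched (hP : P.a 0 = P.a (Fin.last (r + 1))) (m : Fin (r + 2)) :
    Matched k m0 m1 (P.a m) :=
  let ⟨i, hi⟩ := P.exists_castSucc_eq hP m
  hi ▸ (P.vStep i).matched

theorem potential_succ_lt (hk : m1 + 1 ≤ k) (hP : P.a 0 = P.a (Fin.last (r + 1)))
    (i : Fin (r + 1)) : potential m0 m1 (P.a i.succ) < potential m0 m1 (P.a i.castSucc) := by
  obtain ⟨j, hj⟩ := P.exists_castSucc_eq hP i.succ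
  exact potential_lt_of_vStep hk (P.vStep i) (hj ▸ P.vStep j) (P.matched hP j.succ)

end VPath

end Acyclic

theorem matching_acyclic_general (n k : ℕ) :
    ∀ m0 m1 : ℕ, m0 + k + 1 ≤ n → 1 ≤ m1 → m1 + 1 ≤ k →
      ∀ (r : ℕ) (P : VPath n k m0 m1 r), P.a 0 ≠ P.a (Fin.last (r + 1)) := by
  intro m0 m1 _ _ hk r P hP
  have hanti : StrictAnti (potential m0 m1 ∘ P.a) :=
    Fin.strictAnti_iff_succ_lt.2 (P.potential_succ_lt hk hP)
  exact (hanti (Fin.last_pos (n := r))).ne' (congrArg (potential m0 m1) hP)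

/-- For all admissible `m₀, m₁`, the matching `V` is acyclic: there is
no nontrivial closed `V`-path. -/
theorem matching_acyclic (n k : ℕ) (hk1 : 1 ≤ k) (hk2 : k ≤ n - 1) :
    ∀ m0 m1 : ℕ, m0 + k + 1 ≤ n → 1 ≤ m1 → m1 + 1 ≤ k →
      ∀ (r : ℕ) (P : VPath n k m0 m1 r), P.a 0 ≠ P.a (Fin.last (r + 1)) :=
  matching_acyclic_general n k
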